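/- arXiv:2309.11250 — 4 statements merged into one kernel-verified Lean document; each statement's English description precedes it below -/
import Mathlib

section
/- In the two-player zero-sum matrix game with payoff matrix A^(m) (the m×m RIG matrix, m ≥ 2), the pair of uniform mixed strategies ((1/m,...,1/m), (1/m,...,1/m)) is a Nash equilibrium, and it is the unique Nash equilibrium of the game. -/
open Matrix BigOperators

/-- The RIG payoff matrix: `A i j = 1` if `j = i`, `-1` if `j = i + 1 (mod m)`, `0` otherwise. -/
noncomputable def rigMatrix (m : ℕ) [NeZero m] : Matrix (ZMod m) (ZMod m) ℝ :=
  fun i j => if j = i then 1 else if j = i + 1 then -1 else 0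

/-- A probability vector: nonnegative entries summing to 1. -/
def IsProbVec {α : Type*} [Fintype α] (p : α → ℝ) : Prop :=
  (∀ a, 0 ≤ p a) ∧ ∑ a, p a = 1

/-- Nash equilibrium of the zero-sum game with payoff matrix `rigMatrix m`:
the row player receives `σ₁ᵀ A σ₂`, the column player its negation, and
neither can improve by a unilateral deviation. -/
def IsNashEq (m : ℕ) [NeZero m] (σ₁ σ₂ : ZMod m → ℝ) : Prop :=
  IsProbVec σ₁ ∧ IsProbVec σ₂ ∧
  (∀ τ : ZMod m → ℝ, IsProbVec τ →
    τ ⬝ᵥ (rigMatrix m).mulVec σ₂ ≤ σ₁ ⬝ᵥ (rigMatrix m).mulVec σ₂) ∧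
  (∀ τ : ZMod m → ℝ, IsProbVec τ →
    -(σ₁ ⬝ᵥ (rigMatrix m).mulVec τ) ≤ -(σ₁ ⬝ᵥ (rigMatrix m).mulVec σ₂))

section Aux

variable (m : ℕ) [NeZero m]

lemma rig_one_ne (hm : 2 ≤ m) (i : ZMod m) : i + 1 ≠ i := by
  haveI : Fact (1 < m) := ⟨hm⟩
  intro h
  have h1 : (1 : ZMod m) = 0 := by
    have := congrArg (fun x => x - i) h
    simpa using this
  exact one_ne_zero h1

lemma rig_mulVec (hm : 2 ≤ m) (σ : ZMod m → ℝ) (i : ZMod m) :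
    (rigMatrix m).mulVec σ i = σ i - σ (i + 1) := by
  have hne := rig_one_ne m hm i
  have key : ∀ j : ZMod m,
      (if j = i then (1:ℝ) else if j = i + 1 then -1 else 0) * σ j
      = (if j = i then σ j else 0) + (if j = i + 1 then -σ j else 0) := by
    intro j
    by_cases h1 : j = i <;> by_cases h2 : j = i + 1 <;> simp_all <;> ring
  simp only [Matrix.mulVec, dotProduct, rigMatrix]
  rw [Finset.sum_congr rfl (fun j _ => key j), Finset.sum_add_distrib]
  simp [sub_eq_add_neg]

lemma rig_sum_shift (σ : ZMod m → ℝ) : ∑ i, σ (i + 1) = ∑ i, σ i :=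
  Fintype.sum_equiv (Equiv.addRight 1) _ _ (fun _ => rfl)

lemma rig_sum_shift' (σ : ZMod m → ℝ) : ∑ i, σ (i - 1) = ∑ i, σ i :=
  Fintype.sum_equiv (Equiv.subRight 1) _ _ (fun _ => rfl)

lemma uniform_prob (hm : 2 ≤ m) : IsProbVec (fun _ : ZMod m => (1:ℝ)/m) := by
  have hm0 : (m:ℝ) ≠ 0 := Nat.cast_ne_zero.mpr (NeZero.ne m)
  refine ⟨fun a => by positivity, ?_⟩
  rw [Finset.sum_const, Finset.card_univ, ZMod.card, nsmul_eq_mul]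
  field_simp

lemma basis_prob (k : ZMod m) : IsProbVec (fun j : ZMod m => if j = k then (1:ℝ) else 0) := by
  refine ⟨fun a => by by_cases h : a = k <;> simp [h], ?_⟩
  simp

lemma eq_uniform (hm : 2 ≤ m) (σ : ZMod m → ℝ) (hstep : ∀ i, σ (i + 1) = σ i)
    (hsum : ∑ i, σ i = 1) : σ = fun _ => (1:ℝ)/m := by
  have hconst : ∀ i : ZMod m, σ i = σ 0 := by
    have hn : ∀ n : ℕ, σ (n : ZMod m) = σ 0 := by
      intro n
      induction n with
      | zero => simp
      | succ k ih => rw [Nat.cast_succ, hstep, ih]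
    intro i
    obtain ⟨n, rfl⟩ := ZMod.natCast_zmod_surjective i
    exact hn n
  have hm0 : (m:ℝ) ≠ 0 := Nat.cast_ne_zero.mpr (NeZero.ne m)
  have hms : (m:ℝ) * σ 0 = 1 := by
    rw [← hsum, Finset.sum_congr rfl (fun i _ => hconst i), Finset.sum_const,
      Finset.card_univ, ZMod.card, nsmul_eq_mul]
  funext i
  rw [hconst i]
  field_simp
  linarith

lemma uniform_dot (hm : 2 ≤ m) (σ : ZMod m → ℝ) :
    (fun _ : ZMod m => (1:ℝ)/m) ⬝ᵥ (rigMatrix m).mulVec σ = 0 := by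
  simp only [dotProduct, rig_mulVec m hm]
  rw [← Finset.mul_sum, Finset.sum_sub_distrib, rig_sum_shift, sub_self, mul_zero]

lemma dot_uniform (hm : 2 ≤ m) (σ : ZMod m → ℝ) :
    σ ⬝ᵥ (rigMatrix m).mulVec (fun _ : ZMod m => (1:ℝ)/m) = 0 := by
  simp only [dotProduct, rig_mulVec m hm]
  simp

lemma basis_dot (hm : 2 ≤ m) (σ : ZMod m → ℝ) (k : ZMod m) :
    (fun j : ZMod m => if j = k then (1:ℝ) else 0) ⬝ᵥ (rigMatrix m).mulVec σ
      = σ k - σ (k + 1) := by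
  simp only [dotProduct]
  rw [Finset.sum_eq_single k (by intro b _ hb; simp [hb]) (by simp)]
  simp [rig_mulVec m hm]

lemma dot_basis (hm : 2 ≤ m) (σ : ZMod m → ℝ) (k : ZMod m) :
    σ ⬝ᵥ (rigMatrix m).mulVec (fun j : ZMod m => if j = k then (1:ℝ) else 0)
      = σ k - σ (k - 1) := by
  simp only [dotProduct, rig_mulVec m hm]
  have key : ∀ i : ZMod m,
      σ i * ((if i = k then (1:ℝ) else 0) - (if i + 1 = k then 1 else 0))
      = (if i = k then σ i else 0) - (if i = k - 1 then σ i else 0) := by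
    intro i
    simp only [eq_sub_iff_add_eq]
    split_ifs <;> ring
  rw [Finset.sum_congr rfl (fun i _ => key i), Finset.sum_sub_distrib]
  simp

end Aux

/-- The pair of uniform strategies is the unique Nash equilibrium of the RIG matrix game. -/
theorem rig_uniform_unique_nash (m : ℕ) [NeZero m] (hm : 2 ≤ m) :
    IsNashEq m (fun _ => (1 : ℝ) / m) (fun _ => (1 : ℝ) / m) ∧
    (∀ σ₁ σ₂ : ZMod m → ℝ, IsNashEq m σ₁ σ₂ →
      σ₁ = (fun _ => (1 : ℝ) / m) ∧ σ₂ = (fun _ => (1 : ℝ) / m)) := by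
  constructor
  · refine ⟨uniform_prob m hm, uniform_prob m hm, ?_, ?_⟩
    · intro τ hτ
      rw [dot_uniform m hm, dot_uniform m hm]
    · intro τ hτ
      rw [uniform_dot m hm, uniform_dot m hm]
  · rintro σ₁ σ₂ ⟨hp1, hp2, h3, h4⟩
    have hv1 : 0 ≤ σ₁ ⬝ᵥ (rigMatrix m).mulVec σ₂ := by
      have := h3 _ (uniform_prob m hm)
      rwa [uniform_dot m hm] at this
    have hv2 : σ₁ ⬝ᵥ (rigMatrix m).mulVec σ₂ ≤ 0 := by
      have := h4 _ (uniform_prob m hm)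
      rw [dot_uniform m hm] at this
      linarith
    have hv : σ₁ ⬝ᵥ (rigMatrix m).mulVec σ₂ = 0 := le_antisymm hv2 hv1
    -- σ₂ is uniform
    have hle : ∀ i : ZMod m, σ₂ i - σ₂ (i + 1) ≤ 0 := by
      intro i
      have := h3 _ (basis_prob m i)
      rw [basis_dot m hm, hv] at this
      exact this
    have hsum2 : ∑ i : ZMod m, (σ₂ i - σ₂ (i + 1)) = 0 := by
      rw [Finset.sum_sub_distrib, rig_sum_shift, sub_self]
    have heq2 : ∀ i : ZMod m, σ₂ (i + 1) = σ₂ i := by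
      intro i
      have := (Finset.sum_eq_zero_iff_of_nonpos (fun i _ => hle i)).mp hsum2 i
        (Finset.mem_univ i)
      linarith
    -- σ₁ is uniform
    have hge : ∀ j : ZMod m, 0 ≤ σ₁ j - σ₁ (j - 1) := by
      intro j
      have := h4 _ (basis_prob m j)
      rw [dot_basis m hm, hv] at this
      linarith
    have hsum1 : ∑ j : ZMod m, (σ₁ j - σ₁ (j - 1)) = 0 := by
      rw [Finset.sum_sub_distrib, rig_sum_shift', sub_self]
    have heq1 : ∀ i : ZMod m, σ₁ (i + 1) = σ₁ i := by
      intro i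
      have h := (Finset.sum_eq_zero_iff_of_nonneg (fun i _ => hge i)).mp hsum1 (i + 1)
        (Finset.mem_univ _)
      have h' : (i + 1 : ZMod m) - 1 = i := by ring
      rw [h'] at h
      linarith
    exact ⟨eq_uniform m hm σ₁ heq1 hp1.2, eq_uniform m hm σ₂ heq2 hp2.2⟩
end

section
/- Let m ≥ 2 and 1 ≤ f ≤ m/2 with gcd(f, m) = 1, and let B be the dense RIG matrix defined by B[i][j] = g(j - i mod m) with g(l) = 1 for 0 ≤ l ≤ f-1, g(l) = -1 for m-f ≤ l ≤ m-1, g(l) = 0 otherwise. If p is a probability vector in R^m with B·p = 0 (all entries zero), then p is the uniform vector (1/m, ..., 1/m). -/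
open Matrix BigOperators

/-- The dense RIG payoff matrix: `B i j = g((j - i) mod m)` where `g l = 1` for
`0 ≤ l ≤ f - 1`, `g l = -1` for `m - f ≤ l ≤ m - 1`, and `g l = 0` otherwise. -/
noncomputable def denseRigMatrix (m f : ℕ) [NeZero m] : Matrix (ZMod m) (ZMod m) ℝ :=
  fun i j => if (j - i).val < f then 1 else if m - f ≤ (j - i).val then -1 else 0

private lemma shift_const {m : ℕ} [NeZero m] (f : ℕ) (hgcd : Nat.gcd f m = 1)
    (q : ZMod m → ℝ) (hq : ∀ x : ZMod m, q (x + (f : ZMod m)) = q x) :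
    ∀ x : ZMod m, q x = q 0 := by
  have key : ∀ k : ℕ, q ((k : ZMod m) * (f : ZMod m)) = q 0 := by
    intro k
    induction k with
    | zero => simp
    | succ n ih =>
      have e : ((n + 1 : ℕ) : ZMod m) * (f : ZMod m)
          = (n : ZMod m) * f + f := by push_cast; ring
      rw [e, hq]; exact ih
  intro x
  obtain ⟨u, hu⟩ := (ZMod.isUnit_iff_coprime f m).mpr hgcd
  have hx := key ((x * ↑u⁻¹).val)
  rwa [ZMod.natCast_val, ZMod.cast_id, ← hu, Units.inv_mul_cancel_right] at hx

/-- If `p` is a probability vector with `B ⬝ p = 0`, then `p` is uniform. -/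
theorem denseRig_kernel_prob_is_uniform (m f : ℕ) [NeZero m] (hm : 2 ≤ m)
    (hf1 : 1 ≤ f) (hf2 : 2 * f ≤ m) (hgcd : Nat.gcd f m = 1)
    (p : ZMod m → ℝ) (hp : IsProbVec p)
    (h : (denseRigMatrix m f).mulVec p = 0) :
    ∀ k : ZMod m, p k = 1 / m := by
  have hfm : f < m := by omega
  set A : ZMod m → ZMod m → ℝ := fun i j => if (j - i).val < f then 1 else 0 with hA
  set S : ZMod m → ℝ := fun i => ∑ j, A i j * p j with hS
  have hvalf : ((f : ZMod m)).val = f := by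
    rw [ZMod.val_natCast, Nat.mod_eq_of_lt hfm]
  have hfne : (f : ZMod m) ≠ 0 := by
    intro hc
    have := congrArg ZMod.val hc
    rw [hvalf, ZMod.val_zero] at this
    omega
  -- decomposition of B
  have hB : ∀ i j, denseRigMatrix m f i j = A i j - A (i - (f : ZMod m)) j := by
    intro i j
    have hv := ZMod.val_lt (j - i)
    set v := (j - i).val with hvdef
    have hsub : j - (i - (f : ZMod m)) = ((v + f : ℕ) : ZMod m) := by
      push_cast
      rw [hvdef, ZMod.natCast_val, ZMod.cast_id]
      ring
    have hval2 : (j - (i - (f : ZMod m))).val = (v + f) % m := by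
      rw [hsub, ZMod.val_natCast]
    simp only [denseRigMatrix, hA, hval2, ← hvdef]
    rcases Nat.lt_or_ge v f with h1 | h1
    · have h2 : ¬ m - f ≤ v := by omega
      have h3 : (v + f) % m = v + f := Nat.mod_eq_of_lt (by omega)
      rw [if_pos h1, if_pos h1, h3, if_neg (by omega : ¬ v + f < f)]
      norm_num
    · rcases Nat.lt_or_ge v (m - f) with h2 | h2
      · have h3 : (v + f) % m = v + f := Nat.mod_eq_of_lt (by omega)
        rw [if_neg (by omega : ¬ v < f), if_neg (by omega : ¬ v < f),
          if_neg (by omega : ¬ m - f ≤ v), h3, if_neg (by omega : ¬ v + f < f)]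
        norm_num
      · have h3 : (v + f) % m = v + f - m := by
          rw [Nat.mod_eq_sub_mod (by omega), Nat.mod_eq_of_lt (by omega)]
        rw [if_neg (by omega : ¬ v < f), if_neg (by omega : ¬ v < f),
          if_pos h2, h3, if_pos (by omega : v + f - m < f)]
        norm_num
  have hSrec : ∀ i : ZMod m, S i - S (i - (f : ZMod m)) = 0 := by
    intro i
    have e1 : S i - S (i - (f : ZMod m)) = ∑ j, denseRigMatrix m f i j * p j := by
      rw [hS]
      rw [← Finset.sum_sub_distrib]
      exact (Finset.sum_congr rfl fun j _ => by rw [hB, sub_mul]).symm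
    rw [e1]
    have h0 : (denseRigMatrix m f).mulVec p i = 0 := congrFun h i
    simpa [Matrix.mulVec, dotProduct] using h0
  have hScyc : ∀ x : ZMod m, S (x + (f : ZMod m)) = S x := by
    intro x
    have := hSrec (x + (f : ZMod m))
    rw [add_sub_cancel_right] at this
    linarith
  have hSconst := shift_const f hgcd S hScyc
  -- step 2
  have hstep : ∀ i : ZMod m, p (i + (f : ZMod m)) = p i := by
    intro i
    have hd : ∀ j : ZMod m, A (i + 1) j - A i j
        = (if j = i + (f : ZMod m) then (1:ℝ) else 0) - (if j = i then (1:ℝ) else 0) := by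
      intro j
      by_cases h0 : j = i
      · subst h0
        have hz : (j - j).val = 0 := by simp
        have hneg : (j - (j + 1)) = ((m - 1 : ℕ) : ZMod m) := by
          rw [Nat.cast_sub (by omega : 1 ≤ m)]
          simp [ZMod.natCast_self]
        have hm1 : (j - (j + 1)).val = m - 1 := by
          rw [hneg, ZMod.val_natCast, Nat.mod_eq_of_lt (by omega)]
        have hjf : ¬ j = j + (f : ZMod m) := by
          intro hc
          exact hfne (by linear_combination -hc)
        simp only [hA, hz, hm1, if_pos (by omega : 0 < f),
          if_neg (by omega : ¬ m - 1 < f), if_neg hjf, if_pos rfl]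
        norm_num
      · by_cases hf' : j = i + (f : ZMod m)
        · subst hf'
          have hv : (i + (f : ZMod m) - i).val = f := by
            rw [add_sub_cancel_left, hvalf]
          have hw : (i + (f : ZMod m) - (i + 1)) = ((f - 1 : ℕ) : ZMod m) := by
            rw [Nat.cast_sub hf1]
            push_cast
            ring
          have hwv : (i + (f : ZMod m) - (i + 1)).val = f - 1 := by
            rw [hw, ZMod.val_natCast, Nat.mod_eq_of_lt (by omega)]
          simp only [hA, hv, hwv, if_neg (by omega : ¬ f < f),
            if_pos (by omega : f - 1 < f), if_pos rfl,
            if_neg (show ¬ i + (f : ZMod m) = i by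
              intro hc; exact hfne (by linear_combination hc))]
          norm_num
        · -- generic case
          have hv := ZMod.val_lt (j - i)
          set v := (j - i).val with hvdef
          have hji : j - i = (v : ZMod m) := by
            rw [hvdef, ZMod.natCast_val, ZMod.cast_id]
          have hv0 : v ≠ 0 := by
            intro hc
            apply h0
            have : j - i = 0 := by rw [hji, hc]; simp
            linear_combination this
          have hvf : v ≠ f := by
            intro hc
            apply hf'
            have : j - i = (f : ZMod m) := by rw [hji, hc]
            linear_combination this
          have hw : j - (i + 1) = ((v - 1 : ℕ) : ZMod m) := by
            rw [Nat.cast_sub (by omega : 1 ≤ v)]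
            push_cast
            rw [← hji]
            ring
          have hwv : (j - (i + 1)).val = v - 1 := by
            rw [hw, ZMod.val_natCast, Nat.mod_eq_of_lt (by omega)]
          simp only [hA, hwv, ← hvdef, if_neg h0, if_neg hf']
          rcases Nat.lt_or_ge v f with h1 | h1
          · rw [if_pos h1, if_pos (by omega : v - 1 < f)]
            norm_num
          · rw [if_neg (by omega : ¬ v < f), if_neg (by omega : ¬ v - 1 < f)]
    have e2 : S (i + 1) - S i = p (i + (f : ZMod m)) - p i := by
      have key : ∀ j : ZMod m, A (i+1) j * p j - A i j * p j
          = (if j = i + (f : ZMod m) then (1:ℝ) else 0) * p j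
            - (if j = i then (1:ℝ) else 0) * p j := by
        intro j
        rw [← sub_mul, hd j, sub_mul]
      rw [hS, ← Finset.sum_sub_distrib]
      simp only [key]
      rw [Finset.sum_sub_distrib]
      simp [Finset.sum_ite_eq']
    have hc1 := hSconst (i + 1)
    have hc2 := hSconst i
    have : p (i + (f : ZMod m)) - p i = 0 := by rw [← e2]; linarith
    linarith
  have hconst := shift_const f hgcd p hstep
  have hmR : (m : ℝ) ≠ 0 := by
    exact_mod_cast (by omega : m ≠ 0)
  have hsum : (m : ℝ) * p 0 = 1 := by
    have : ∑ a : ZMod m, p a = (m : ℝ) * p 0 := by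
      rw [Finset.sum_congr rfl fun a _ => hconst a]
      rw [Finset.sum_const, Finset.card_univ, ZMod.card, nsmul_eq_mul]
    rw [← this]
    exact hp.2
  intro k
  rw [hconst k]
  field_simp at hsum ⊢
  linarith
end

section
/- In the n-player RIG game (n even, m ≥ 2 strategies per player), where players 2k-1 and 2k play the zero-sum matrix game A^(m) against each other independently of all other players, the profile in which every player plays the uniform mixed strategy (1/m, ..., 1/m) gives every player expected utility 0, and for every coalition P of players and every joint deviation by P (with players outside P fixed at uniform), the sum of expected utilities of players in P is still at most 0. -/
open BigOperators



/-- The pairwise RIG payoff to the first player of a pair: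
`1` if `a = b (mod m)`, `-1` if `a = b - 1 (mod m)`, `0` otherwise. -/
noncomputable def rigPay (m : ℕ) [NeZero m] (a b : ZMod m) : ℝ :=
  if a = b then 1 else if a = b - 1 then -1 else 0

/-- In the `2N`-player RIG game, players are indexed by `Fin N × Bool`: the pair
`k` consists of players `(k, false)` and `(k, true)`, who play the zero-sum RIG
matrix game against each other independently of all other players. -/
noncomputable def rigGamePayoff (m N : ℕ) [NeZero m] (i : Fin N × Bool)
    (s : Fin N × Bool → ZMod m) : ℝ :=
  if i.2 = false then rigPay m (s (i.1, false)) (s (i.1, true))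
  else -rigPay m (s (i.1, false)) (s (i.1, true))

/-- Expected utility of player `i` under a mixed strategy profile `σ`,
with all players sampling independently. -/
noncomputable def rigExpUtil (m N : ℕ) [NeZero m]
    (σ : Fin N × Bool → ZMod m → ℝ) (i : Fin N × Bool) : ℝ :=
  ∑ s : Fin N × Bool → ZMod m, (∏ j, σ j (s j)) * rigGamePayoff m N i s

section Factor
open Finset

variable {ι X : Type*} [Fintype ι] [DecidableEq ι] [Fintype X] [DecidableEq X]

lemma factor2 (σ : ι → X → ℝ) (h1 : ∀ j, ∑ a, σ j a = 1)
    (i1 i2 : ι) (hne : i1 ≠ i2) (g : X → X → ℝ) :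
    ∑ s : ι → X, (∏ j, σ j (s j)) * g (s i1) (s i2)
      = ∑ a, ∑ b, σ i1 a * σ i2 b * g a b := by
  have key : ∀ a b : X,
      (∑ s : ι → X, if s i1 = a ∧ s i2 = b then ∏ j, σ j (s j) else 0)
        = σ i1 a * σ i2 b := by
    intro a b
    set τ : ι → X → ℝ := fun j x =>
      if j = i1 then (if x = a then σ i1 a else 0)
      else if j = i2 then (if x = b then σ i2 b else 0) else σ j x with hτ
    have hprod : ∀ s : ι → X,
        (∏ j, τ j (s j)) = if s i1 = a ∧ s i2 = b then ∏ j, σ j (s j) else 0 := by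
      intro s
      by_cases h : s i1 = a ∧ s i2 = b
      · rw [if_pos h]
        refine Finset.prod_congr rfl fun j _ => ?_
        simp only [hτ]
        by_cases hj1 : j = i1
        · subst hj1; simp [h.1]
        · by_cases hj2 : j = i2
          · subst hj2; simp [h.2, hj1]
          · simp [hj1, hj2]
      · rw [if_neg h]
        rcases not_and_or.mp h with h' | h'
        · exact Finset.prod_eq_zero (mem_univ i1) (by simp [hτ, h'])
        · exact Finset.prod_eq_zero (mem_univ i2) (by simp [hτ, hne.symm, h'])
    calc (∑ s : ι → X, if s i1 = a ∧ s i2 = b then ∏ j, σ j (s j) else 0)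
        = ∑ s : ι → X, ∏ j, τ j (s j) := by
          exact (Finset.sum_congr rfl fun s _ => (hprod s).symm)
      _ = ∏ j, ∑ x, τ j x := (Fintype.prod_sum τ).symm
      _ = σ i1 a * σ i2 b := by
          have hval : ∀ j, (∑ x, τ j x)
              = if j = i1 then σ i1 a else if j = i2 then σ i2 b else 1 := by
            intro j
            simp only [hτ]
            by_cases hj1 : j = i1
            · simp [hj1, Finset.sum_ite_eq']
            · by_cases hj2 : j = i2
              · simp [hj1, hj2, Finset.sum_ite_eq']
              · simp [hj1, hj2, h1 j]
          rw [Finset.prod_congr rfl fun j _ => hval j]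
          rw [← Finset.prod_subset (Finset.subset_univ ({i1, i2} : Finset ι))
            (fun j _ hj => by
              simp only [Finset.mem_insert, Finset.mem_singleton, not_or] at hj
              simp [hj.1, hj.2])]
          rw [Finset.prod_pair hne]
          simp [hne, hne.symm]
  calc ∑ s : ι → X, (∏ j, σ j (s j)) * g (s i1) (s i2)
      = ∑ s : ι → X, ∑ a, ∑ b,
          (if s i1 = a ∧ s i2 = b then ∏ j, σ j (s j) else 0) * g a b := by
        refine Finset.sum_congr rfl fun s _ => ?_
        rw [Finset.sum_eq_single (s i1)]
        · rw [Finset.sum_eq_single (s i2)]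
          · simp
          · intro c _ hc; simp [Ne.symm hc]
          · simp
        · intro b _ hb; apply Finset.sum_eq_zero; intro c _
          simp [Ne.symm hb]
        · simp
    _ = ∑ a, ∑ b, σ i1 a * σ i2 b * g a b := by
        rw [Finset.sum_comm]
        refine Finset.sum_congr rfl fun a _ => ?_
        rw [Finset.sum_comm]
        refine Finset.sum_congr rfl fun b _ => ?_
        rw [← Finset.sum_mul, key a b]
end Factor

section RigLemmas
open Finset
variable {m : ℕ} [NeZero m]

lemma zmod_ne_succ (hm : 2 ≤ m) (a : ZMod m) : a ≠ a + 1 := by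
  haveI : Fact (1 < m) := ⟨hm⟩
  intro h
  have h0 : (1 : ZMod m) = 0 := by linear_combination -h
  exact one_ne_zero h0

lemma rigPay_sum_right (hm : 2 ≤ m) (a : ZMod m) : ∑ b, rigPay m a b = 0 := by
  have hne := zmod_ne_succ hm a
  have : ∀ b : ZMod m, rigPay m a b
      = (if b = a then (1:ℝ) else 0) + (if b = a + 1 then (-1:ℝ) else 0) := by
    intro b
    unfold rigPay
    have h2 : a = b - 1 ↔ b = a + 1 := by
      rw [eq_sub_iff_add_eq]; exact eq_comm
    by_cases h : a = b
    · subst h; simp [Ne.symm hne, hne]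
    · rw [if_neg h, if_neg (Ne.symm h), zero_add]
      exact if_congr h2 rfl rfl
  rw [Finset.sum_congr rfl fun b _ => this b, Finset.sum_add_distrib]
  simp

lemma rigPay_sum_left (hm : 2 ≤ m) (b : ZMod m) : ∑ a, rigPay m a b = 0 := by
  haveI : Fact (1 < m) := ⟨hm⟩
  have hne : b - 1 ≠ b := by
    intro h
    have h0 : (1 : ZMod m) = 0 := by linear_combination -h
    exact one_ne_zero h0
  have : ∀ a : ZMod m, rigPay m a b
      = (if a = b then (1:ℝ) else 0) + (if a = b - 1 then (-1:ℝ) else 0) := by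
    intro a
    unfold rigPay
    by_cases h : a = b
    · subst h; simp [Ne.symm hne]
    · simp [h]
  rw [Finset.sum_congr rfl fun a _ => this a, Finset.sum_add_distrib]
  simp

end RigLemmas

section Main
open Finset
variable {m N : ℕ} [NeZero m]

/-- Value of pair `k`: the expected payoff of player `(k, false)`. -/
noncomputable def rigV (m : ℕ) [NeZero m] (N : ℕ) (σ : Fin N × Bool → ZMod m → ℝ)
    (k : Fin N) : ℝ :=
  ∑ a, ∑ b, σ (k, false) a * σ (k, true) b * rigPay m a b

lemma expUtil_false (σ : Fin N × Bool → ZMod m → ℝ) (h1 : ∀ j, ∑ a, σ j a = 1)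
    (k : Fin N) : rigExpUtil m N σ (k, false) = rigV m N σ k := by
  unfold rigExpUtil rigGamePayoff rigV
  simp only [if_pos rfl]
  exact factor2 σ h1 (k, false) (k, true) (by simp) (rigPay m)

lemma expUtil_true (σ : Fin N × Bool → ZMod m → ℝ) (h1 : ∀ j, ∑ a, σ j a = 1)
    (k : Fin N) : rigExpUtil m N σ (k, true) = -rigV m N σ k := by
  unfold rigExpUtil rigGamePayoff rigV
  simp only [Bool.true_eq_false, if_false]
  have := factor2 σ h1 (k, false) (k, true) (by simp) (fun a b => -rigPay m a b)
  simp only [mul_neg] at this ⊢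
  rw [this]
  rw [← Finset.sum_neg_distrib]
  refine Finset.sum_congr rfl fun a _ => ?_
  rw [← Finset.sum_neg_distrib]

lemma rigV_zero_right (hm : 2 ≤ m) (σ : Fin N × Bool → ZMod m → ℝ) (k : Fin N)
    (h : σ (k, true) = fun _ => (1 : ℝ) / m) : rigV m N σ k = 0 := by
  unfold rigV
  rw [h]
  refine Finset.sum_eq_zero fun a _ => ?_
  have : ∑ b, σ (k, false) a * (1 / (m:ℝ)) * rigPay m a b
      = σ (k, false) a * (1 / (m:ℝ)) * ∑ b, rigPay m a b := by
    rw [Finset.mul_sum]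
  rw [this, rigPay_sum_right hm, mul_zero]

lemma rigV_zero_left (hm : 2 ≤ m) (σ : Fin N × Bool → ZMod m → ℝ) (k : Fin N)
    (h : σ (k, false) = fun _ => (1 : ℝ) / m) : rigV m N σ k = 0 := by
  unfold rigV
  rw [h]
  rw [Finset.sum_comm]
  refine Finset.sum_eq_zero fun b _ => ?_
  have : ∑ a, (1 / (m:ℝ)) * σ (k, true) b * rigPay m a b
      = (1 / (m:ℝ)) * σ (k, true) b * ∑ a, rigPay m a b := by
    rw [Finset.mul_sum]
  rw [this, rigPay_sum_left hm, mul_zero]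

lemma uniform_sum : ∑ a : ZMod m, (1 : ℝ) / m = 1 := by
  have hm0 : (m : ℝ) ≠ 0 := Nat.cast_ne_zero.mpr (NeZero.ne m)
  rw [Finset.sum_const, Finset.card_univ, ZMod.card, nsmul_eq_mul]
  field_simp

end Main

/-- In the `2N`-player RIG game, the all-uniform profile gives every player
expected utility 0, and for every coalition `P` and every joint deviation by `P`
(players outside `P` staying uniform), the total expected utility of `P` is at
most 0 (alliance resistance). -/
theorem rig_alliance_resistant (m N : ℕ) [NeZero m] (hm : 2 ≤ m) :
    (∀ i : Fin N × Bool,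
      rigExpUtil m N (fun _ _ => (1 : ℝ) / m) i = 0) ∧
    (∀ (P : Finset (Fin N × Bool)) (σ : Fin N × Bool → ZMod m → ℝ),
      (∀ i, IsProbVec (σ i)) →
      (∀ i ∉ P, σ i = fun _ => (1 : ℝ) / m) →
      ∑ i ∈ P, rigExpUtil m N σ i ≤ 0) := by
  constructor
  · intro i
    obtain ⟨k, c⟩ := i
    have h1 : ∀ j : Fin N × Bool, ∑ a : ZMod m, (1 : ℝ) / m = 1 := fun _ => uniform_sum
    have hV : rigV m N (fun _ _ => (1 : ℝ) / m) k = 0 :=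
      rigV_zero_right hm _ k rfl
    cases c
    · rw [expUtil_false _ h1, hV]
    · rw [expUtil_true _ h1, hV, neg_zero]
  · intro P σ hσ hP
    have h1 : ∀ j, ∑ a, σ j a = 1 := fun j => (hσ j).2
    have key : ∑ i ∈ P, rigExpUtil m N σ i = 0 := by
      have : ∑ i ∈ P, rigExpUtil m N σ i
          = ∑ i : Fin N × Bool, if i ∈ P then rigExpUtil m N σ i else 0 := by
        rw [Finset.sum_ite_mem, Finset.univ_inter]
      rw [this, Fintype.sum_prod_type]
      refine Finset.sum_eq_zero fun k _ => ?_
      rw [Fintype.sum_bool]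
      by_cases hf : (k, false) ∈ P <;> by_cases ht : (k, true) ∈ P
      · rw [if_pos hf, if_pos ht, expUtil_false σ h1, expUtil_true σ h1]; ring
      · rw [if_pos hf, if_neg ht, expUtil_false σ h1,
          rigV_zero_right hm σ k (hP _ ht)]; ring
      · rw [if_neg hf, if_pos ht, expUtil_true σ h1,
          rigV_zero_left hm σ k (hP _ hf)]; ring
      · rw [if_neg hf, if_neg ht]; ring
    rw [key]
end

section
/- For each m ≥ 2, consider two players each choosing k independent bits, where for each bit position the players play matching pennies (payoff +1 to player 1 if the bits match at that position, -1 otherwise, payoffs summed over positions). Then the strategy profile in which each player samples a single uniform bit b and sets all k of their bits equal to b is a Nash equilibrium, yet the resulting XOR-combined k-bit output is not uniform on {0,1}^k when k ≥ 2 (it equals 0...0 or 1...1 each with probability 1/2). -/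
open BigOperators

/-- Payoff to player 1 in `k` parallel matching-pennies games: `+1` for each bit
position where the two players' bits match, `-1` for each mismatch. -/
noncomputable def parallelPay (k : ℕ) (x y : Fin k → ZMod 2) : ℝ :=
  ∑ j : Fin k, if x j = y j then 1 else -1

/-- Expected payoff to player 1 when the players independently sample from
mixed strategies `σ` and `τ` over `{0,1}^k`. -/
noncomputable def parallelExpPay (k : ℕ) (σ τ : (Fin k → ZMod 2) → ℝ) : ℝ :=
  ∑ x : Fin k → ZMod 2, ∑ y : Fin k → ZMod 2, σ x * τ y * parallelPay k x y

/-- The "copy one uniform bit" strategy: choose a uniform bit `b` and set all `k`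
bits equal to `b`; i.e. put mass `1/2` on each of the two constant strings. -/
noncomputable def copyBitStrategy (k : ℕ) : (Fin k → ZMod 2) → ℝ :=
  fun x => if x = (fun _ => 0) ∨ x = (fun _ => 1) then 1 / 2 else 0

/-- Distribution of the XOR-combined output `x + y` when both players play `σ`. -/
noncomputable def xorOutputDist (k : ℕ) (σ : (Fin k → ZMod 2) → ℝ) :
    (Fin k → ZMod 2) → ℝ :=
  fun z => ∑ x : Fin k → ZMod 2, σ x * σ (x + z)

lemma zmod2_cases (a : ZMod 2) : a = 0 ∨ a = 1 := by revert a; decide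

lemma c0_ne_c1 (k : ℕ) (hk : 0 < k) :
    (fun _ : Fin k => (0 : ZMod 2)) ≠ (fun _ => 1) := by
  intro h
  exact absurd (congrFun h ⟨0, hk⟩) (by decide)

lemma sum_copy (k : ℕ) (hk : 0 < k) (f : (Fin k → ZMod 2) → ℝ) :
    ∑ x : Fin k → ZMod 2, copyBitStrategy k x * f x
      = 1 / 2 * f (fun _ => 0) + 1 / 2 * f (fun _ => 1) := by
  have hne := c0_ne_c1 k hk
  have key : ∀ x : Fin k → ZMod 2, copyBitStrategy k x * f x =
      (if x = (fun _ => 0) then 1 / 2 * f x else 0) +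
      (if x = (fun _ => 1) then 1 / 2 * f x else 0) := by
    intro x
    unfold copyBitStrategy
    by_cases h0 : x = (fun _ => 0)
    · subst h0; simp [hne]
    · by_cases h1 : x = (fun _ => 1)
      · subst h1; simp [Ne.symm hne]
      · simp [h0, h1]
  rw [Finset.sum_congr rfl fun x _ => key x, Finset.sum_add_distrib]
  simp [Finset.sum_ite_eq']

lemma pay_row (k : ℕ) (x : Fin k → ZMod 2) :
    parallelPay k x (fun _ => 0) + parallelPay k x (fun _ => 1) = 0 := by
  unfold parallelPay
  rw [← Finset.sum_add_distrib]
  apply Finset.sum_eq_zero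
  intro j _
  rcases zmod2_cases (x j) with h | h <;> simp [h]

lemma pay_col (k : ℕ) (y : Fin k → ZMod 2) :
    parallelPay k (fun _ => 0) y + parallelPay k (fun _ => 1) y = 0 := by
  unfold parallelPay
  rw [← Finset.sum_add_distrib]
  apply Finset.sum_eq_zero
  intro j _
  rcases zmod2_cases (y j) with h | h <;> simp [h]

lemma exp_left (k : ℕ) (hk : 0 < k) (τ : (Fin k → ZMod 2) → ℝ) :
    parallelExpPay k τ (copyBitStrategy k) = 0 := by
  unfold parallelExpPay
  apply Finset.sum_eq_zero
  intro x _
  have step : ∑ y : Fin k → ZMod 2, τ x * copyBitStrategy k y * parallelPay k x y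
      = τ x * ∑ y : Fin k → ZMod 2, copyBitStrategy k y * parallelPay k x y := by
    rw [Finset.mul_sum]; exact Finset.sum_congr rfl fun y _ => by ring
  rw [step, sum_copy k hk (fun y => parallelPay k x y)]
  have := pay_row k x
  have hz : 1 / 2 * parallelPay k x (fun _ => 0) + 1 / 2 * parallelPay k x (fun _ => 1) = 0 := by
    linarith
  rw [hz, mul_zero]

lemma exp_right (k : ℕ) (hk : 0 < k) (τ : (Fin k → ZMod 2) → ℝ) :
    parallelExpPay k (copyBitStrategy k) τ = 0 := by
  unfold parallelExpPay
  have step : ∀ x : Fin k → ZMod 2,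
      ∑ y : Fin k → ZMod 2, copyBitStrategy k x * τ y * parallelPay k x y
      = copyBitStrategy k x * ∑ y : Fin k → ZMod 2, τ y * parallelPay k x y := by
    intro x
    rw [Finset.mul_sum]; exact Finset.sum_congr rfl fun y _ => by ring
  rw [Finset.sum_congr rfl fun x _ => step x,
    sum_copy k hk (fun x => ∑ y : Fin k → ZMod 2, τ y * parallelPay k x y),
    Finset.mul_sum, Finset.mul_sum, ← Finset.sum_add_distrib]
  apply Finset.sum_eq_zero
  intro y _
  have := pay_col k y
  have hp : parallelPay k (fun _ => 0) y = - parallelPay k (fun _ => 1) y := by linarith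
  rw [hp]; ring

lemma xor_zero (k : ℕ) (hk : 0 < k) :
    xorOutputDist k (copyBitStrategy k) (fun _ => 0) = 1 / 2 := by
  unfold xorOutputDist
  rw [sum_copy k hk (fun x => copyBitStrategy k (x + fun _ => 0))]
  have h0 : ((fun _ : Fin k => (0 : ZMod 2)) + fun _ => 0) = (fun _ => 0) := by
    funext j; simp
  have h1 : ((fun _ : Fin k => (1 : ZMod 2)) + fun _ => 0) = (fun _ => 1) := by
    funext j; simp
  rw [h0, h1]
  simp [copyBitStrategy]
  norm_num

lemma xor_one (k : ℕ) (hk : 0 < k) :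
    xorOutputDist k (copyBitStrategy k) (fun _ => 1) = 1 / 2 := by
  unfold xorOutputDist
  rw [sum_copy k hk (fun x => copyBitStrategy k (x + fun _ => 1))]
  have h0 : ((fun _ : Fin k => (0 : ZMod 2)) + fun _ => 1) = (fun _ => 1) := by
    funext j; simp
  have h1 : ((fun _ : Fin k => (1 : ZMod 2)) + fun _ => 1) = (fun _ => 0) := by
    funext j; show (1 : ZMod 2) + 1 = 0; decide
  rw [h0, h1]
  simp [copyBitStrategy]
  norm_num

/-- The "copy one uniform bit" profile is a Nash equilibrium of the `k`-fold
parallel matching pennies game, yet for `k ≥ 2` its XOR-combined output is not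
uniform: it is `0...0` or `1...1` each with probability `1/2`. -/
theorem parallel_rig_bad_equilibrium (k : ℕ) (hk : 2 ≤ k) :
    (IsProbVec (copyBitStrategy k) ∧
      (∀ τ : (Fin k → ZMod 2) → ℝ, IsProbVec τ →
        parallelExpPay k τ (copyBitStrategy k) ≤
          parallelExpPay k (copyBitStrategy k) (copyBitStrategy k)) ∧
      (∀ τ : (Fin k → ZMod 2) → ℝ, IsProbVec τ →
        -(parallelExpPay k (copyBitStrategy k) τ) ≤
          -(parallelExpPay k (copyBitStrategy k) (copyBitStrategy k)))) ∧
    xorOutputDist k (copyBitStrategy k) (fun _ => 0) = 1 / 2 ∧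
    xorOutputDist k (copyBitStrategy k) (fun _ => 1) = 1 / 2 ∧
    ¬(∀ z : Fin k → ZMod 2,
        xorOutputDist k (copyBitStrategy k) z = 1 / 2 ^ k) := by
  have hk0 : 0 < k := by omega
  refine ⟨⟨?_, ?_, ?_⟩, xor_zero k hk0, xor_one k hk0, ?_⟩
  · constructor
    · intro a
      unfold copyBitStrategy
      split <;> norm_num
    · have h := sum_copy k hk0 (fun _ => 1)
      simp only [mul_one] at h
      rw [h]; norm_num
  · intro τ _
    rw [exp_left k hk0 τ, exp_left k hk0 (copyBitStrategy k)]
  · intro τ _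
    rw [exp_right k hk0 τ, exp_right k hk0 (copyBitStrategy k)]
  · intro h
    have h0 := h (fun _ => 0)
    rw [xor_zero k hk0] at h0
    have h4 : (4 : ℝ) ≤ 2 ^ k := by
      calc (4 : ℝ) = 2 ^ 2 := by norm_num
        _ ≤ 2 ^ k := by apply pow_le_pow_right₀ (by norm_num) hk
    have hle : (1 : ℝ) / 2 ^ k ≤ 1 / 4 :=
      one_div_le_one_div_of_le (by norm_num) h4
    linarith
end
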